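/- arXiv:1804.10227 — 2 statements merged into one kernel-verified Lean document; each statement's English description precedes it below -/
import Mathlib

section
/- Temporal Duality Theorem: a temporal formula φ is a THT_f-tautology (true in all finite HT-traces at all time points) if and only if σ(φ) is a THT_f-tautology, where σ swaps each temporal connective with its time-reversed counterpart. -/
open scoped Classical

/-- Temporal formulas over atoms `α`, with past and future operators. -/
inductive TForm (α : Type) : Type
  | atom : α → TForm α
  | bot  : TForm α
  | top  : TForm α
  | and  : TForm α → TForm α → TForm α
  | or   : TForm α → TForm α → TForm α
  | imp  : TForm α → TForm α → TForm α
  | prev : TForm α → TForm α            -- ● previous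
  | wprev : TForm α → TForm α           -- weak previous
  | since : TForm α → TForm α → TForm α -- S
  | trigger : TForm α → TForm α → TForm α -- T
  | next : TForm α → TForm α            -- ○ next
  | wnext : TForm α → TForm α           -- weak next
  | untl : TForm α → TForm α → TForm α  -- U
  | rels : TForm α → TForm α → TForm α  -- R

variable {α : Type}

/-- THT satisfaction: `sat lam φ H T k` means ⟨H,T⟩,k ⊨ φ on an HT-trace of length `lam`. -/
def sat (lam : ℕ∞) : TForm α → (ℕ → Set α) → (ℕ → Set α) → ℕ → Prop
  | .atom a, H, _, k => a ∈ H k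
  | .bot, _, _, _ => False
  | .top, _, _, _ => True
  | .and φ ψ, H, T, k => sat lam φ H T k ∧ sat lam ψ H T k
  | .or φ ψ, H, T, k => sat lam φ H T k ∨ sat lam ψ H T k
  | .imp φ ψ, H, T, k =>
      (sat lam φ H T k → sat lam ψ H T k) ∧ (sat lam φ T T k → sat lam ψ T T k)
  | .prev φ, H, T, k => 0 < k ∧ sat lam φ H T (k - 1)
  | .wprev φ, H, T, k => k = 0 ∨ sat lam φ H T (k - 1)
  | .since φ ψ, H, T, k =>
      ∃ j, j ≤ k ∧ sat lam ψ H T j ∧ ∀ i, j < i → i ≤ k → sat lam φ H T i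
  | .trigger φ ψ, H, T, k =>
      ∀ j, j ≤ k → sat lam ψ H T j ∨ ∃ i, j < i ∧ i ≤ k ∧ sat lam φ H T i
  | .next φ, H, T, k => ((k : ℕ∞) + 1 ≤ lam) ∧ sat lam φ H T (k + 1)
  | .wnext φ, H, T, k => ¬ ((k : ℕ∞) + 1 ≤ lam) ∨ sat lam φ H T (k + 1)
  | .untl φ ψ, H, T, k =>
      ∃ j, k ≤ j ∧ (j : ℕ∞) ≤ lam ∧ sat lam ψ H T j ∧ ∀ i, k ≤ i → i < j → sat lam φ H T i
  | .rels φ ψ, H, T, k =>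
      ∀ j, k ≤ j → (j : ℕ∞) ≤ lam → sat lam ψ H T j ∨ ∃ i, k ≤ i ∧ i < j ∧ sat lam φ H T i

/-- Classical LTL satisfaction on a (possibly finite) trace `T` of length `lam`. -/
def satL (lam : ℕ∞) : TForm α → (ℕ → Set α) → ℕ → Prop
  | .atom a, T, k => a ∈ T k
  | .bot, _, _ => False
  | .top, _, _ => True
  | .and φ ψ, T, k => satL lam φ T k ∧ satL lam ψ T k
  | .or φ ψ, T, k => satL lam φ T k ∨ satL lam ψ T k
  | .imp φ ψ, T, k => satL lam φ T k → satL lam ψ T k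
  | .prev φ, T, k => 0 < k ∧ satL lam φ T (k - 1)
  | .wprev φ, T, k => k = 0 ∨ satL lam φ T (k - 1)
  | .since φ ψ, T, k =>
      ∃ j, j ≤ k ∧ satL lam ψ T j ∧ ∀ i, j < i → i ≤ k → satL lam φ T i
  | .trigger φ ψ, T, k =>
      ∀ j, j ≤ k → satL lam ψ T j ∨ ∃ i, j < i ∧ i ≤ k ∧ satL lam φ T i
  | .next φ, T, k => ((k : ℕ∞) + 1 ≤ lam) ∧ satL lam φ T (k + 1)
  | .wnext φ, T, k => ¬ ((k : ℕ∞) + 1 ≤ lam) ∨ satL lam φ T (k + 1)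
  | .untl φ ψ, T, k =>
      ∃ j, k ≤ j ∧ (j : ℕ∞) ≤ lam ∧ satL lam ψ T j ∧ ∀ i, k ≤ i → i < j → satL lam φ T i
  | .rels φ ψ, T, k =>
      ∀ j, k ≤ j → (j : ℕ∞) ≤ lam → satL lam ψ T j ∨ ∃ i, k ≤ i ∧ i < j ∧ satL lam φ T i

/-- ¬φ := φ → ⊥ -/
def TForm.neg (φ : TForm α) : TForm α := .imp φ .bot
/-- F (final) := ¬○⊤ -/
def TForm.F : TForm α := TForm.neg (.next .top)
/-- I (initial) := ¬●⊤ -/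
def TForm.I : TForm α := TForm.neg (.prev .top)
/-- □φ := ⊥ R φ (always afterward) -/
def TForm.always (φ : TForm α) : TForm α := .rels .bot φ
/-- ◇φ := ⊤ U φ (eventually afterward) -/
def TForm.ev (φ : TForm α) : TForm α := .untl .top φ
/-- ■φ := ⊥ T φ (always before) -/
def TForm.alwaysB (φ : TForm α) : TForm α := .trigger .bot φ
/-- ♦φ := ⊤ S φ (eventually before) -/
def TForm.evB (φ : TForm α) : TForm α := .since .top φ

/-- ⟨H,T⟩ is an HT-trace: H_i ⊆ T_i for all i. -/
def isHT (H T : ℕ → Set α) : Prop := ∀ i, H i ⊆ T i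

/-- Implication-free formulas. -/
def ImpFree : TForm α → Prop
  | .imp _ _ => False
  | .and φ ψ => ImpFree φ ∧ ImpFree ψ
  | .or φ ψ => ImpFree φ ∧ ImpFree ψ
  | .since φ ψ => ImpFree φ ∧ ImpFree ψ
  | .trigger φ ψ => ImpFree φ ∧ ImpFree ψ
  | .untl φ ψ => ImpFree φ ∧ ImpFree ψ
  | .rels φ ψ => ImpFree φ ∧ ImpFree ψ
  | .prev φ => ImpFree φ
  | .wprev φ => ImpFree φ
  | .next φ => ImpFree φ
  | .wnext φ => ImpFree φ
  | _ => True

/-- Boolean dual: swaps ∧/∨, ⊤/⊥, U/R, S/T, ○/ŏ, ●/weak-previous. -/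
def dual : TForm α → TForm α
  | .atom a => .atom a
  | .bot => .top
  | .top => .bot
  | .and φ ψ => .or (dual φ) (dual ψ)
  | .or φ ψ => .and (dual φ) (dual ψ)
  | .imp φ ψ => .imp (dual φ) (dual ψ)
  | .prev φ => .wprev (dual φ)
  | .wprev φ => .prev (dual φ)
  | .since φ ψ => .trigger (dual φ) (dual ψ)
  | .trigger φ ψ => .since (dual φ) (dual ψ)
  | .next φ => .wnext (dual φ)
  | .wnext φ => .next (dual φ)
  | .untl φ ψ => .rels (dual φ) (dual ψ)
  | .rels φ ψ => .untl (dual φ) (dual ψ)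

/-- Time-reversal σ: swaps each temporal connective with its past/future mirror. -/
def tswap : TForm α → TForm α
  | .atom a => .atom a
  | .bot => .bot
  | .top => .top
  | .and φ ψ => .and (tswap φ) (tswap ψ)
  | .or φ ψ => .or (tswap φ) (tswap ψ)
  | .imp φ ψ => .imp (tswap φ) (tswap ψ)
  | .prev φ => .next (tswap φ)
  | .next φ => .prev (tswap φ)
  | .wprev φ => .wnext (tswap φ)
  | .wnext φ => .wprev (tswap φ)
  | .since φ ψ => .untl (tswap φ) (tswap ψ)
  | .untl φ ψ => .since (tswap φ) (tswap ψ)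
  | .trigger φ ψ => .rels (tswap φ) (tswap ψ)
  | .rels φ ψ => .trigger (tswap φ) (tswap ψ)

/-- φ is a THT_f-tautology: true in all finite HT-traces at all time points. -/
def THTfTautology {α : Type} (φ : TForm α) : Prop :=
  ∀ (n : ℕ) (H T : ℕ → Set α), isHT H T → ∀ k : ℕ, k ≤ n → sat (n : ℕ∞) φ H T k

/-!
Reversing a trace of length `n` (time `i ↦ n - i`) exchanges past and future, so by induction
on `φ`, `φ` holds at `i` on `⟨H, T⟩` iff `σ φ` holds at `n - i` on the reversed trace. Reversal
preserves `H ⊆ T` pointwise, so a tautology `σ φ` makes `φ` one; as `σ` is an involution, the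
converse follows by applying this to `σ φ`.
-/

def Mirrored (n : ℕ) (P Q : ℕ → Prop) : Prop :=
  ∀ i ≤ n, P i ↔ Q (n - i)

namespace Mirrored

variable {n : ℕ} {P P' Q Q' : ℕ → Prop}

theorem symm (h : Mirrored n P P') : Mirrored n P' P := fun i hi => by
  simpa only [Nat.sub_sub_self hi] using (h (n - i) (Nat.sub_le n i)).symm

theorem not (h : Mirrored n P P') : Mirrored n (¬ P ·) (¬ P' ·) :=
  fun i hi => not_congr (h i hi)

theorem prev_next (hP : Mirrored n P P') :
    Mirrored n (fun k => 0 < k ∧ P (k - 1)) (fun k => (k : ℕ∞) + 1 ≤ n ∧ P' (k + 1)) := by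
  intro k hk
  dsimp only
  norm_cast
  constructor
  · rintro ⟨hk0, hPk⟩
    exact ⟨by omega, by rwa [show n - k + 1 = n - (k - 1) by omega, ← hP (k - 1) (by omega)]⟩
  · rintro ⟨hkn, hPk⟩
    exact ⟨by omega, by rwa [hP (k - 1) (by omega), show n - (k - 1) = n - k + 1 by omega]⟩

theorem wprev_wnext (hP : Mirrored n P P') :
    Mirrored n (fun k => k = 0 ∨ P (k - 1)) (fun k => ¬ (k : ℕ∞) + 1 ≤ n ∨ P' (k + 1)) :=
  fun k hk => by
    simpa only [not_and_or, not_not, not_lt, Nat.le_zero] using hP.not.prev_next.not k hk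

theorem since_untl (hP : Mirrored n P P') (hQ : Mirrored n Q Q') :
    Mirrored n (fun k => ∃ j, j ≤ k ∧ Q j ∧ ∀ i, j < i → i ≤ k → P i)
      (fun k => ∃ j, k ≤ j ∧ (j : ℕ∞) ≤ n ∧ Q' j ∧ ∀ i, k ≤ i → i < j → P' i) := by
  intro k hk
  constructor
  · rintro ⟨j, hjk, hQj, hPj⟩
    exact ⟨n - j, by omega, mod_cast Nat.sub_le n j, (hQ j (by omega)).1 hQj,
      fun i hki hij => (hP.symm i (by omega)).2 (hPj (n - i) (by omega) (by omega))⟩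
  · rintro ⟨j, hkj, hjn, hQj, hPj⟩
    have hjn : j ≤ n := mod_cast hjn
    exact ⟨n - j, by omega, (hQ.symm j hjn).1 hQj,
      fun i hji hik => (hP i (by omega)).2 (hPj (n - i) (by omega) (by omega))⟩

theorem trigger_rels (hP : Mirrored n P P') (hQ : Mirrored n Q Q') :
    Mirrored n (fun k => ∀ j, j ≤ k → Q j ∨ ∃ i, j < i ∧ i ≤ k ∧ P i)
      (fun k => ∀ j, k ≤ j → (j : ℕ∞) ≤ n → Q' j ∨ ∃ i, k ≤ i ∧ i < j ∧ P' i) :=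
  fun k hk => by
    simpa only [not_exists, not_and, not_forall, not_not, exists_prop, or_iff_not_imp_left]
      using (hP.not.since_untl hQ.not).not k hk

end Mirrored

theorem tswap_tswap (φ : TForm α) : tswap (tswap φ) = φ := by
  induction φ <;> simp only [tswap, *]

theorem mirrored_sat_tswap (n : ℕ) (φ : TForm α) (H T : ℕ → Set α) :
    Mirrored n (sat n φ H T) (sat n (tswap φ) (fun i => H (n - i)) (fun i => T (n - i))) := by
  induction φ generalizing H with
  | atom a => intro i hi; simp only [sat, tswap, Nat.sub_sub_self hi]
  | bot => exact fun _ _ => Iff.rfl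
  | top => exact fun _ _ => Iff.rfl
  | and φ ψ ihφ ihψ => exact fun i hi => and_congr (ihφ H i hi) (ihψ H i hi)
  | or φ ψ ihφ ihψ => exact fun i hi => or_congr (ihφ H i hi) (ihψ H i hi)
  | imp φ ψ ihφ ihψ =>
    exact fun i hi =>
      and_congr (imp_congr (ihφ H i hi) (ihψ H i hi)) (imp_congr (ihφ T i hi) (ihψ T i hi))
  | prev φ ih => exact (ih H).prev_next
  | wprev φ ih => exact (ih H).wprev_wnext
  | since φ ψ ihφ ihψ => exact (ihφ H).since_untl (ihψ H)
  | trigger φ ψ ihφ ihψ => exact (ihφ H).trigger_rels (ihψ H)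
  | next φ ih => exact (ih H).symm.prev_next.symm
  | wnext φ ih => exact (ih H).symm.wprev_wnext.symm
  | untl φ ψ ihφ ihψ => exact ((ihφ H).symm.since_untl (ihψ H).symm).symm
  | rels φ ψ ihφ ihψ => exact ((ihφ H).symm.trigger_rels (ihψ H).symm).symm

theorem THTfTautology.of_tswap {φ : TForm α} (h : THTfTautology (tswap φ)) :
    THTfTautology φ := fun n H T hHT k hk =>
  (mirrored_sat_tswap n φ H T k hk).2 (h n _ _ (fun i => hHT (n - i)) (n - k) (Nat.sub_le n k))

/-- Temporal Duality Theorem: φ is a THT_f-tautology iff σ(φ) is. -/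
theorem temporal_duality {α : Type} (φ : TForm α) :
    THTfTautology φ ↔ THTfTautology (tswap φ) :=
  ⟨fun h => .of_tswap (by rwa [tswap_tswap]), .of_tswap⟩
end

section
/- Over finite traces, □◇a is THT_f-equivalent to □(F → a): for any finite HT-trace ⟨H,T⟩ of length n and any k ≤ n, ⟨H,T⟩,k ⊨ □◇a iff ⟨H,T⟩,k ⊨ □(F → a), i.e., iff a ∈ H_n. -/
open scoped Classical

variable {α : Type}

/-!
On a trace of length `n`, `F` holds exactly at the last state `n`, and `◇φ` evaluated at `n` can
only look at `n` itself; so both `□◇a` and `□(F → a)` reduce to `a` at state `n`. The `T`-component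
of the here-and-there implication adds nothing because `H n ⊆ T n`.
-/

section Semantics

variable {lam : ℕ∞} {H T : ℕ → Set α} {k : ℕ}

theorem sat_always_iff {φ : TForm α} :
    sat lam (TForm.always φ) H T k ↔ ∀ j, k ≤ j → (j : ℕ∞) ≤ lam → sat lam φ H T j := by
  simp [TForm.always, sat]

theorem sat_ev_iff {φ : TForm α} :
    sat lam (TForm.ev φ) H T k ↔ ∃ j, k ≤ j ∧ (j : ℕ∞) ≤ lam ∧ sat lam φ H T j := by
  simp [TForm.ev, sat]

theorem sat_F_iff : sat lam TForm.F H T k ↔ ¬ (k : ℕ∞) + 1 ≤ lam := by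
  simp [TForm.F, TForm.neg, sat]

end Semantics

section FiniteTrace

variable {n : ℕ} {H T : ℕ → Set α} {k : ℕ}

theorem sat_F_iff_eq_length (hk : k ≤ n) : sat (n : ℕ∞) TForm.F H T k ↔ k = n := by
  rw [sat_F_iff]
  norm_cast
  omega

theorem sat_always_ev_iff_sat_length {φ : TForm α} (hk : k ≤ n) :
    sat (n : ℕ∞) (TForm.always (TForm.ev φ)) H T k ↔ sat (n : ℕ∞) φ H T n := by
  simp only [sat_always_iff, sat_ev_iff, Nat.cast_le]
  constructor
  · intro h
    obtain ⟨m, hnm, hmn, hm⟩ := h n hk le_rfl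
    exact le_antisymm hmn hnm ▸ hm
  · exact fun hn j _ hjn => ⟨n, hjn, le_rfl, hn⟩

theorem sat_always_F_imp_iff {φ : TForm α} (hk : k ≤ n) :
    sat (n : ℕ∞) (TForm.always (.imp TForm.F φ)) H T k ↔
      sat (n : ℕ∞) φ H T n ∧ sat (n : ℕ∞) φ T T n := by
  simp only [sat_always_iff, Nat.cast_le]
  constructor
  · intro h
    obtain ⟨hH, hT⟩ := h n hk le_rfl
    exact ⟨hH ((sat_F_iff_eq_length le_rfl).2 rfl), hT ((sat_F_iff_eq_length le_rfl).2 rfl)⟩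
  · rintro ⟨hH, hT⟩ j _ hjn
    refine ⟨fun hF => ?_, fun hF => ?_⟩
    · exact (sat_F_iff_eq_length hjn).1 hF ▸ hH
    · exact (sat_F_iff_eq_length hjn).1 hF ▸ hT

end FiniteTrace

/-- over finite traces, □◇a ≡ □(F → a):
    at any k ≤ n both are satisfied iff a ∈ H_n. -/
theorem always_ev_finite {α : Type} (a : α) (n : ℕ) (H T : ℕ → Set α) (hHT : isHT H T)
    (k : ℕ) (hk : k ≤ n) :
    (sat (n : ℕ∞) (TForm.always (TForm.ev (.atom a))) H T k ↔
      sat (n : ℕ∞) (TForm.always (.imp TForm.F (.atom a))) H T k) ∧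
    (sat (n : ℕ∞) (TForm.always (TForm.ev (.atom a))) H T k ↔ a ∈ H n) := by
  have hev : sat (n : ℕ∞) (TForm.always (TForm.ev (.atom a))) H T k ↔ a ∈ H n :=
    sat_always_ev_iff_sat_length hk
  have himp : sat (n : ℕ∞) (TForm.always (.imp TForm.F (.atom a))) H T k ↔ a ∈ H n := by
    rw [sat_always_F_imp_iff hk]
    exact ⟨And.left, fun ha => ⟨ha, hHT n ha⟩⟩
  exact ⟨hev.trans himp.symm, hev⟩
end
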